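/- arXiv:1907.07949 — 2 statements merged into one kernel-verified Lean document; each statement's English description precedes it below -/
import Mathlib

section
/- Let V be a finite set, i₀, j₀ ∈ V, and let ℚ_{i₀}^W(du) be the probability measure on {u : V → ℝ, u_{i₀} = 0} with density c_V exp(-(1/2)Σ_{i→j} W_{i,j}(e^{u_j - u_i} - 1))·√(D_{i₀}(W,u)) with respect to Π_{i ≠ i₀} du_i, where D_{i₀}(W,u) = Σ_{T ∈ 𝒯_{i₀}} Π_{(i,j)∈T} W_{i,j} e^{u_j - u_i} over directed spanning trees toward i₀. Assume (as known) that ℚ_{j₀}^W is a probability measure for every j₀. Then ∫ e^{u_{j₀}} ℚ_{i₀}^W(du) = 1. -/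
open Finset MeasureTheory
open scoped ENNReal Classical

variable {V : Type*} [Fintype V] [DecidableEq V]

/-- `T` is a directed spanning tree oriented towards the root `r`: edges are non-loops,
every vertex other than the root has exactly one outgoing edge, the root has none,
and every vertex is connected to the root along directed edges of `T`. -/
def IsDirSpanningTree (T : Finset (V × V)) (r : V) : Prop :=
  (∀ e ∈ T, e.1 ≠ e.2) ∧
  (∀ i : V, i ≠ r → ∃! j : V, (i, j) ∈ T) ∧
  (∀ j : V, (r, j) ∉ T) ∧
  (∀ i : V, ∃ (n : ℕ) (f : ℕ → V), f 0 = i ∧ f n = r ∧ ∀ k < n, (f k, f (k + 1)) ∈ T)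

/-- `D_{i₀}(W,u) = Σ_{T ∈ 𝒯_{i₀}} Π_{(i,j) ∈ T} W_{i,j} e^{u_j - u_i}`. -/
noncomputable def treePoly (W : V → V → ℝ) (r : V) (u : V → ℝ) : ℝ :=
  ∑ T ∈ Finset.univ.filter (fun T : Finset (V × V) => IsDirSpanningTree T r),
    ∏ e ∈ T, W e.1 e.2 * Real.exp (u e.2 - u e.1)

/-- Extension of coordinates `x` on `{i ≠ i₀}` to a function `u : V → ℝ` with `u i₀ = 0`. -/
noncomputable def extUp (i₀ : V) (x : {i : V // i ≠ i₀} → ℝ) : V → ℝ :=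
  fun i => if h : i = i₀ then 0 else x ⟨i, h⟩

/-- Density of `ℚ_{i₀}^W` with respect to Lebesgue measure `Π_{i ≠ i₀} du_i`:
`c_V exp(-(1/2) Σ_{i→j} W_{i,j}(e^{u_j-u_i}-1)) √(D_{i₀}(W,u))`. -/
noncomputable def QDensity (W : V → V → ℝ) (i₀ : V) (x : {i : V // i ≠ i₀} → ℝ) : ℝ :=
  ((Real.sqrt (2 * Real.pi)) ^ (Fintype.card V - 1))⁻¹ *
  Real.exp (-(1/2) * ∑ p ∈ Finset.univ.filter (fun p : V × V => p.1 ≠ p.2),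
      W p.1 p.2 * (Real.exp (extUp i₀ x p.2 - extUp i₀ x p.1) - 1)) *
  Real.sqrt (treePoly W i₀ (extUp i₀ x))


/-! Write `u = extUp i₀ x` and `ũ = u - u j₀`. The exponent of the density only sees differences
`u j - u i`, and so is unchanged by `u ↦ ũ`. Splitting `u j - u i = (u i + u j) - 2 u i` turns the
tree product into `exp (2 u r - 2 ∑ u)` times a product of the symmetric weights
`W i j exp (u i + u j)`; reversing the path from the new root to the old one is a bijection
between spanning trees rooted at `i₀` and at `j₀` preserving such products, so
`D_{j₀}(W, ũ) = exp (2 u j₀) D_{i₀}(W, u)`. Hence `exp (u j₀)` times the density of `ℚ_{i₀}` at `u`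
is the density of `ℚ_{j₀}` at `ũ`, and `u ↦ ũ` is a volume-preserving linear change of
coordinates: a relabelling followed by an involutive shear. -/

open Function

section DirectedSpanningTrees

variable {α : Type*}

lemma Finset.mem_image_swap {s : Finset (α × α)} {p : α × α} :
    p ∈ s.image Prod.swap ↔ p.swap ∈ s := by
  constructor
  · intro h
    obtain ⟨q, hq, rfl⟩ := Finset.mem_image.1 h
    simpa using hq
  · exact fun h => Finset.mem_image.2 ⟨p.swap, h, p.swap_swap⟩

lemma exists_path_of_reflTransGen {T : Finset (α × α)} {i j : α}
    (h : Relation.ReflTransGen (fun a b => (a, b) ∈ T) i j) :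
    ∃ (n : ℕ) (f : ℕ → α), f 0 = i ∧ f n = j ∧ ∀ k < n, (f k, f (k + 1)) ∈ T := by
  induction h using Relation.ReflTransGen.head_induction_on with
  | refl => exact ⟨0, fun _ => j, rfl, rfl, by simp⟩
  | @head a b hab _ ih =>
    obtain ⟨n, f, hf0, hfn, hf⟩ := ih
    refine ⟨n + 1, fun k => if k = 0 then a else f (k - 1), by simp, by simpa using hfn, ?_⟩
    rintro (_ | k) hk
    · simpa [hf0] using hab
    · simpa using hf k (by omega)

noncomputable def treeParent (T : Finset (α × α)) (i : α) : α :=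
  if h : ∃ j, (i, j) ∈ T then h.choose else i

lemma treeParent_mem {T : Finset (α × α)} {i : α} (h : ∃ j, (i, j) ∈ T) :
    (i, treeParent T i) ∈ T := by
  rw [treeParent, dif_pos h]
  exact h.choose_spec

noncomputable def treeDepth (T : Finset (α × α)) (r s : α) : ℕ :=
  if h : ∃ n, (treeParent T)^[n] s = r then Nat.find h else 0

noncomputable def rootPath (T : Finset (α × α)) (r s : α) : Finset (α × α) :=
  (Finset.range (treeDepth T r s)).image
    fun k => ((treeParent T)^[k] s, (treeParent T)^[k + 1] s)

/-- Reversing the path from `s` to the root `r` makes `s` the root. -/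
noncomputable def reroot (T : Finset (α × α)) (r s : α) : Finset (α × α) :=
  (T \ rootPath T r s) ∪ (rootPath T r s).image Prod.swap

lemma mem_rootPath {T : Finset (α × α)} {r s a b : α} :
    (a, b) ∈ rootPath T r s ↔
      ∃ k < treeDepth T r s, (treeParent T)^[k] s = a ∧ (treeParent T)^[k + 1] s = b := by
  simp only [rootPath, Finset.mem_image, Finset.mem_range, Prod.ext_iff]

namespace IsDirSpanningTree

variable {T : Finset (α × α)} {r s : α}

lemma mem_iff (hT : IsDirSpanningTree T r) {i j : α} :
    (i, j) ∈ T ↔ i ≠ r ∧ j = treeParent T i := by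
  constructor
  · intro hij
    have hir : i ≠ r := by rintro rfl; exact hT.2.2.1 j hij
    obtain ⟨b, -, hb⟩ := hT.2.1 i hir
    exact ⟨hir, (hb j hij).trans (hb _ (treeParent_mem ⟨j, hij⟩)).symm⟩
  · rintro ⟨hir, rfl⟩
    obtain ⟨b, hb, -⟩ := hT.2.1 i hir
    exact treeParent_mem ⟨b, hb⟩

lemma exists_iterate_eq_root (hT : IsDirSpanningTree T r) (i : α) :
    ∃ n, (treeParent T)^[n] i = r := by
  obtain ⟨n, f, hf0, hfn, hf⟩ := hT.2.2.2 i
  have hiter : ∀ k ≤ n, (treeParent T)^[k] i = f k := by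
    intro k hk
    induction k with
    | zero => simpa using hf0.symm
    | succ k ih =>
      rw [iterate_succ_apply', ih (by omega)]
      exact (hT.mem_iff.1 (hf k hk)).2.symm
  exact ⟨n, (hiter n le_rfl).trans hfn⟩

lemma iterate_treeDepth (hT : IsDirSpanningTree T r) (s : α) :
    (treeParent T)^[treeDepth T r s] s = r := by
  rw [treeDepth, dif_pos (hT.exists_iterate_eq_root s)]
  exact Nat.find_spec (hT.exists_iterate_eq_root s)

lemma iterate_ne_root (hT : IsDirSpanningTree T r) {k : ℕ} (hk : k < treeDepth T r s) :
    (treeParent T)^[k] s ≠ r := by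
  rw [treeDepth, dif_pos (hT.exists_iterate_eq_root s)] at hk
  exact Nat.find_min (hT.exists_iterate_eq_root s) hk

lemma iterate_inj (hT : IsDirSpanningTree T r) {a b : ℕ}
    (ha : a ≤ treeDepth T r s) (hb : b ≤ treeDepth T r s)
    (hab : (treeParent T)^[a] s = (treeParent T)^[b] s) : a = b := by
  wlog hlt : a < b generalizing a b
  · exact (lt_or_eq_of_le (not_lt.1 hlt)).elim (fun h => (this hb ha hab.symm h).symm) Eq.symm
  -- both indices reach the root after `treeDepth - b` further steps, the smaller one too early
  refine absurd ?_ (hT.iterate_ne_root (s := s) (k := treeDepth T r s - b + a) (by omega))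
  rw [iterate_add_apply, hab, ← iterate_add_apply, Nat.sub_add_cancel hb, hT.iterate_treeDepth]

lemma rootPath_subset (hT : IsDirSpanningTree T r) (s : α) : rootPath T r s ⊆ T := by
  rintro ⟨a, b⟩ hab
  obtain ⟨k, hk, rfl, rfl⟩ := mem_rootPath.1 hab
  rw [iterate_succ_apply']
  exact hT.mem_iff.2 ⟨hT.iterate_ne_root hk, rfl⟩

lemma mem_rootPath_of_mem (hT : IsDirSpanningTree T r) {k : ℕ} {b : α}
    (hk : k ≤ treeDepth T r s) (h : ((treeParent T)^[k] s, b) ∈ T) :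
    ((treeParent T)^[k] s, b) ∈ rootPath T r s := by
  obtain ⟨hne, rfl⟩ := hT.mem_iff.1 h
  have hk' : k < treeDepth T r s :=
    lt_of_le_of_ne hk fun hkd => hne (hkd ▸ hT.iterate_treeDepth s)
  exact mem_rootPath.2 ⟨k, hk', rfl, iterate_succ_apply' _ _ _⟩

lemma mem_rootPath_of_mem_of_mem_rootPath (hT : IsDirSpanningTree T r) {a b c : α}
    (hca : (c, a) ∈ rootPath T r s) (hab : (a, b) ∈ T) : (a, b) ∈ rootPath T r s := by
  obtain ⟨l, hl, -, rfl⟩ := mem_rootPath.1 hca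
  exact hT.mem_rootPath_of_mem hl hab

lemma swap_notMem_of_mem_rootPath (hT : IsDirSpanningTree T r) {a b : α}
    (hab : (a, b) ∈ rootPath T r s) : (b, a) ∉ T := by
  intro hba
  obtain ⟨k, hk, rfl, rfl⟩ := mem_rootPath.1 hab
  obtain ⟨l, hl, h1, h2⟩ := mem_rootPath.1 (hT.mem_rootPath_of_mem hk hba)
  have := hT.iterate_inj hl.le hk h1
  have := hT.iterate_inj (by omega) hk.le h2
  omega

lemma disjoint_rootPath_swap (hT : IsDirSpanningTree T r) (s : α) :
    Disjoint (T \ rootPath T r s) ((rootPath T r s).image Prod.swap) := by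
  rw [Finset.disjoint_right]
  rintro ⟨a, b⟩ hab hmem
  exact hT.swap_notMem_of_mem_rootPath (Finset.mem_image_swap.1 hab) (Finset.mem_sdiff.1 hmem).1

lemma swap_mem_reroot {k : ℕ} (hk : k < treeDepth T r s) :
    ((treeParent T)^[k + 1] s, (treeParent T)^[k] s) ∈ reroot T r s :=
  Finset.mem_union_right _ (Finset.mem_image_swap.2 (mem_rootPath.2 ⟨k, hk, rfl, rfl⟩))

lemma parent_mem_reroot (hT : IsDirSpanningTree T r) {i : α}
    (hi : ∀ k ≤ treeDepth T r s, (treeParent T)^[k] s ≠ i) :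
    (i, treeParent T i) ∈ reroot T r s := by
  have hir : i ≠ r := fun h => hi _ le_rfl (h ▸ hT.iterate_treeDepth s)
  refine Finset.mem_union_left _ (Finset.mem_sdiff.2 ⟨hT.mem_iff.2 ⟨hir, rfl⟩, fun hP => ?_⟩)
  obtain ⟨k, hk, h1, -⟩ := mem_rootPath.1 hP
  exact hi k hk.le h1

lemma fst_ne_snd_of_mem_reroot (hT : IsDirSpanningTree T r) {e : α × α}
    (he : e ∈ reroot T r s) : e.1 ≠ e.2 := by
  rcases Finset.mem_union.1 he with he | he
  · exact hT.1 e (Finset.mem_sdiff.1 he).1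
  · exact (hT.1 _ (hT.rootPath_subset s (Finset.mem_image_swap.1 he))).symm

lemma eq_of_mem_reroot (hT : IsDirSpanningTree T r) {a b b' : α}
    (hb : (a, b) ∈ reroot T r s) (hb' : (a, b') ∈ reroot T r s) : b = b' := by
  have key : ∀ {b b'}, (a, b) ∈ T \ rootPath T r s → (a, b') ∈ (rootPath T r s).image Prod.swap →
      False := fun hb hb' => (Finset.mem_sdiff.1 hb).2
    (hT.mem_rootPath_of_mem_of_mem_rootPath (Finset.mem_image_swap.1 hb') (Finset.mem_sdiff.1 hb).1)
  rcases Finset.mem_union.1 hb with hb | hb <;> rcases Finset.mem_union.1 hb' with hb' | hb'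
  · exact (hT.mem_iff.1 (Finset.mem_sdiff.1 hb).1).2.trans
      (hT.mem_iff.1 (Finset.mem_sdiff.1 hb').1).2.symm
  · exact (key hb hb').elim
  · exact (key hb' hb).elim
  · obtain ⟨l, hl, rfl, h⟩ := mem_rootPath.1 (Finset.mem_image_swap.1 hb)
    obtain ⟨l', hl', rfl, h'⟩ := mem_rootPath.1 (Finset.mem_image_swap.1 hb')
    have := hT.iterate_inj (by omega) (by omega) (h.trans h'.symm)
    rw [show l = l' by omega]

lemma exists_mem_reroot (hT : IsDirSpanningTree T r) {a : α} (ha : a ≠ s) :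
    ∃ b, (a, b) ∈ reroot T r s := by
  by_cases hpath : ∃ k ≤ treeDepth T r s, (treeParent T)^[k] s = a
  · obtain ⟨_ | k, hk, rfl⟩ := hpath
    · exact absurd rfl ha
    · exact ⟨_, swap_mem_reroot hk⟩
  · push Not at hpath
    exact ⟨_, hT.parent_mem_reroot hpath⟩

lemma notMem_reroot (hT : IsDirSpanningTree T r) (b : α) : (s, b) ∉ reroot T r s := by
  intro hb
  rcases Finset.mem_union.1 hb with hb | hb
  · exact (Finset.mem_sdiff.1 hb).2
      (hT.mem_rootPath_of_mem (k := 0) (Nat.zero_le _) (Finset.mem_sdiff.1 hb).1)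
  · obtain ⟨l, hl, -, h⟩ := mem_rootPath.1 (Finset.mem_image_swap.1 hb)
    have := hT.iterate_inj (s := s) (a := l + 1) (b := 0) (by omega) (Nat.zero_le _) h
    omega

lemma reflTransGen_reroot (hT : IsDirSpanningTree T r) (s i : α) :
    Relation.ReflTransGen (fun a b => (a, b) ∈ reroot T r s) i s := by
  have hpath : ∀ k ≤ treeDepth T r s,
      Relation.ReflTransGen (fun a b => (a, b) ∈ reroot T r s) ((treeParent T)^[k] s) s := by
    intro k hk
    induction k with
    | zero => exact .refl
    | succ k ih => exact .head (swap_mem_reroot hk) (ih (by omega))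
  -- off the path the parent edges are kept, and following them leads onto the path (at `r`
  -- at the latest)
  obtain ⟨n, hn⟩ := hT.exists_iterate_eq_root i
  induction n generalizing i with
  | zero =>
    convert hpath _ le_rfl using 1
    rw [hT.iterate_treeDepth s, ← hn]
    rfl
  | succ n ih =>
    by_cases hi : ∃ k ≤ treeDepth T r s, (treeParent T)^[k] s = i
    · obtain ⟨k, hk, rfl⟩ := hi
      exact hpath k hk
    · push Not at hi
      exact .head (hT.parent_mem_reroot hi) (ih _ (by rwa [← iterate_succ_apply]))

theorem reroot_isDirSpanningTree (hT : IsDirSpanningTree T r) (s : α) :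
    IsDirSpanningTree (reroot T r s) s :=
  ⟨fun _ he => hT.fst_ne_snd_of_mem_reroot he,
    fun _ ha => (hT.exists_mem_reroot ha).elim fun b hb =>
      ⟨b, hb, fun _ hb' => hT.eq_of_mem_reroot hb' hb⟩,
    hT.notMem_reroot,
    fun i => exists_path_of_reflTransGen (hT.reflTransGen_reroot s i)⟩

lemma iterate_treeParent_reroot (hT : IsDirSpanningTree T r) {j : ℕ} (hj : j ≤ treeDepth T r s) :
    (treeParent (reroot T r s))^[j] r = (treeParent T)^[treeDepth T r s - j] s := by
  induction j with
  | zero => simpa using (hT.iterate_treeDepth s).symm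
  | succ j ih =>
    rw [iterate_succ_apply', ih (by omega),
      show treeDepth T r s - j = treeDepth T r s - (j + 1) + 1 by omega]
    exact ((hT.reroot_isDirSpanningTree s).mem_iff.1 (swap_mem_reroot (by omega))).2.symm

lemma treeDepth_reroot (hT : IsDirSpanningTree T r) (s : α) :
    treeDepth (reroot T r s) s r = treeDepth T r s := by
  have hT' := hT.reroot_isDirSpanningTree s
  apply le_antisymm
  · by_contra! h
    refine hT'.iterate_ne_root h ?_
    rw [hT.iterate_treeParent_reroot le_rfl, Nat.sub_self, iterate_zero_apply]
  · by_contra! h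
    have hs := hT'.iterate_treeDepth r
    rw [hT.iterate_treeParent_reroot h.le] at hs
    have := hT.iterate_inj (b := 0) (by omega) (Nat.zero_le _) hs
    omega

lemma rootPath_reroot (hT : IsDirSpanningTree T r) (s : α) :
    rootPath (reroot T r s) s r = (rootPath T r s).image Prod.swap := by
  ext ⟨a, b⟩
  rw [Finset.mem_image_swap, Prod.swap_prod_mk, mem_rootPath, mem_rootPath, treeDepth_reroot hT]
  have hidx : ∀ {i j : ℕ}, i = j → (treeParent T)^[i] s = (treeParent T)^[j] s := fun h => h ▸ rfl
  constructor
  · rintro ⟨j, hj, rfl, rfl⟩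
    refine ⟨treeDepth T r s - j - 1, by omega, ?_, ?_⟩
    · rw [hT.iterate_treeParent_reroot (by omega)]
      exact hidx (by omega)
    · rw [hT.iterate_treeParent_reroot (by omega)]
      exact hidx (by omega)
  · rintro ⟨k, hk, rfl, rfl⟩
    refine ⟨treeDepth T r s - k - 1, by omega, ?_, ?_⟩
    · rw [hT.iterate_treeParent_reroot (by omega)]
      exact hidx (by omega)
    · rw [hT.iterate_treeParent_reroot (by omega)]
      exact hidx (by omega)

lemma reroot_reroot (hT : IsDirSpanningTree T r) (s : α) : reroot (reroot T r s) s r = T := by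
  have hswap : ((rootPath T r s).image Prod.swap).image Prod.swap = rootPath T r s := by
    simp [Finset.image_image]
  rw [reroot, rootPath_reroot hT, hswap, reroot,
    Finset.union_sdiff_cancel_right (hT.disjoint_rootPath_swap s),
    Finset.sdiff_union_of_subset (hT.rootPath_subset s)]

lemma prod_reroot {M : Type*} [CommMonoid M] (hT : IsDirSpanningTree T r) (s : α)
    (w : α → α → M) (hw : ∀ i j, w i j = w j i) :
    ∏ e ∈ reroot T r s, w e.1 e.2 = ∏ e ∈ T, w e.1 e.2 := by
  rw [reroot, Finset.prod_union (hT.disjoint_rootPath_swap s),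
    Finset.prod_image fun _ _ _ _ h => Prod.swap_injective h]
  simp only [Prod.fst_swap, Prod.snd_swap, ← hw]
  exact Finset.prod_sdiff (hT.rootPath_subset s)

lemma sum_fst_add_root [Fintype α] {M : Type*} [AddCommMonoid M] (hT : IsDirSpanningTree T r)
    (u : α → M) : ∑ e ∈ T, u e.1 + u r = ∑ i, u i := by
  rw [← Finset.sum_erase_add _ _ (Finset.mem_univ r)]
  congr 1
  refine Finset.sum_nbij' Prod.fst (fun i => (i, treeParent T i)) ?_ ?_ ?_ ?_ (fun _ _ => rfl)
  · rintro ⟨a, b⟩ hab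
    exact Finset.mem_erase.2 ⟨(hT.mem_iff.1 hab).1, Finset.mem_univ _⟩
  · intro i hi
    exact hT.mem_iff.2 ⟨(Finset.mem_erase.1 hi).1, rfl⟩
  · rintro ⟨a, b⟩ hab
    simp [(hT.mem_iff.1 hab).2]
  · intro i _
    rfl

end IsDirSpanningTree

theorem sum_prod_dirSpanningTree_eq [Fintype α] {M : Type*} [CommSemiring M]
    (w : α → α → M) (hw : ∀ i j, w i j = w j i) (r s : α) :
    ∑ T ∈ Finset.univ.filter (fun T : Finset (α × α) => IsDirSpanningTree T r),
        ∏ e ∈ T, w e.1 e.2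
      = ∑ T ∈ Finset.univ.filter (fun T : Finset (α × α) => IsDirSpanningTree T s),
        ∏ e ∈ T, w e.1 e.2 := by
  have mem : ∀ {T : Finset (α × α)} {r : α},
      T ∈ Finset.univ.filter (fun T : Finset (α × α) => IsDirSpanningTree T r) ↔
        IsDirSpanningTree T r := by simp
  refine Finset.sum_bij' (fun T _ => reroot T r s) (fun T _ => reroot T s r)
    (fun _ hT => mem.2 ((mem.1 hT).reroot_isDirSpanningTree s))
    (fun _ hT => mem.2 ((mem.1 hT).reroot_isDirSpanningTree r))
    (fun _ hT => (mem.1 hT).reroot_reroot s) (fun _ hT => (mem.1 hT).reroot_reroot r)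
    (fun _ hT => ((mem.1 hT).prod_reroot s w hw).symm)

end DirectedSpanningTrees

section TreePolynomial

variable {α : Type*} [Fintype α]

lemma treePoly_eq_exp_mul (W : α → α → ℝ) (r : α) (u : α → ℝ) :
    treePoly W r u = Real.exp (2 * u r - 2 * ∑ i, u i) *
      ∑ T ∈ Finset.univ.filter (fun T : Finset (α × α) => IsDirSpanningTree T r),
        ∏ e ∈ T, W e.1 e.2 * Real.exp (u e.1 + u e.2) := by
  rw [treePoly, Finset.mul_sum]
  refine Finset.sum_congr rfl fun T hT => ?_
  have hT : IsDirSpanningTree T r := (Finset.mem_filter.1 hT).2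
  calc ∏ e ∈ T, W e.1 e.2 * Real.exp (u e.2 - u e.1)
      = ∏ e ∈ T, Real.exp (-2 * u e.1) * (W e.1 e.2 * Real.exp (u e.1 + u e.2)) :=
        Finset.prod_congr rfl fun e _ => by rw [mul_left_comm, ← Real.exp_add]; ring_nf
    _ = Real.exp (-2 * ∑ e ∈ T, u e.1) * ∏ e ∈ T, W e.1 e.2 * Real.exp (u e.1 + u e.2) := by
        rw [Finset.prod_mul_distrib, ← Real.exp_sum, Finset.mul_sum]
    _ = _ := by
        rw [eq_sub_of_add_eq (hT.sum_fst_add_root u)]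
        ring_nf

lemma treePoly_root_change {W : α → α → ℝ} (hsym : ∀ i j, W i j = W j i) (r s : α)
    (u : α → ℝ) : treePoly W s u = Real.exp (2 * (u s - u r)) * treePoly W r u := by
  have hroot := sum_prod_dirSpanningTree_eq (fun i j => W i j * Real.exp (u i + u j))
    (fun i j => by rw [hsym, add_comm]) s r
  rw [treePoly_eq_exp_mul W s, treePoly_eq_exp_mul W r, hroot, ← mul_assoc, ← Real.exp_add]
  ring_nf

lemma treePoly_sub_const (W : α → α → ℝ) (r : α) (u : α → ℝ) (c : ℝ) :
    treePoly W r (fun i => u i - c) = treePoly W r u := by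
  simp only [treePoly, sub_sub_sub_cancel_right]

end TreePolynomial

section ChangeOfVariables

variable {ι : Type*}

lemma measurePreserving_of_involutive [Fintype ι] (f : (ι → ℝ) →ₗ[ℝ] ι → ℝ)
    (hf : Involutive f) : MeasurePreserving f volume volume := by
  have hdet : LinearMap.det f * LinearMap.det f = 1 := by
    rw [← LinearMap.det_comp, show f.comp f = LinearMap.id from LinearMap.ext hf,
      LinearMap.det_id]
  have habs : |LinearMap.det f| = 1 := by
    rcases mul_self_eq_one_iff.1 hdet with h | h <;> simp [h]
  refine ⟨f.continuous_of_finiteDimensional.measurable, ?_⟩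
  rw [Real.map_linearMap_volume_pi_eq_smul_volume_pi (by rintro h0; simp [h0] at habs),
    abs_inv, habs]
  simp

def shearAt [DecidableEq ι] (a : ι) : (ι → ℝ) →ₗ[ℝ] ι → ℝ where
  toFun y i := (if i = a then 0 else y i) - y a
  map_add' y z := by
    funext i
    by_cases hi : i = a <;> simp only [hi, ↓reduceIte, Pi.add_apply] <;> ring
  map_smul' c y := by
    funext i
    by_cases hi : i = a <;>
      simp only [hi, ↓reduceIte, Pi.smul_apply, smul_eq_mul, RingHom.id_apply] <;> ring

lemma shearAt_involutive [DecidableEq ι] (a : ι) : Involutive (shearAt a) := by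
  intro y
  funext i
  by_cases hi : i = a
  · subst hi
    simp [shearAt]
  · simp [shearAt, hi]

variable {α : Type*} [DecidableEq α] {i₀ j₀ : α}

def subtypeSwap (i₀ j₀ : α) : {i : α // i ≠ i₀} ≃ {i : α // i ≠ j₀} :=
  Equiv.subtypeEquiv (Equiv.swap i₀ j₀) fun a => by
    rw [not_iff_not, Equiv.swap_apply_eq_iff, Equiv.swap_apply_right]

/-- The coordinates `u - u j₀` on `{u j₀ = 0}` of the point with coordinates `x` on `{u i₀ = 0}`. -/
noncomputable def recenter [Fintype α] (h : i₀ ≠ j₀) :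
    ({i : α // i ≠ i₀} → ℝ) ≃ᵐ ({i : α // i ≠ j₀} → ℝ) :=
  (MeasurableEquiv.piCongrLeft (fun _ => ℝ) (subtypeSwap i₀ j₀)).trans
    (MeasurableEquiv.ofInvolutive _ (shearAt_involutive ⟨i₀, h⟩)
      (shearAt _).continuous_of_finiteDimensional.measurable)

lemma measurePreserving_recenter [Fintype α] (h : i₀ ≠ j₀) :
    MeasurePreserving (recenter h) volume volume :=
  (measurePreserving_of_involutive _ (shearAt_involutive _)).comp
    (volume_measurePreserving_piCongrLeft (fun _ => ℝ) (subtypeSwap i₀ j₀))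

lemma piCongrLeft_subtypeSwap_apply (x : {i : α // i ≠ i₀} → ℝ)
    (i : {i : α // i ≠ j₀}) :
    MeasurableEquiv.piCongrLeft (fun _ => ℝ) (subtypeSwap i₀ j₀) x i
      = extUp i₀ x (Equiv.swap i₀ j₀ i) := by
  obtain ⟨i, rfl⟩ := (subtypeSwap i₀ j₀).surjective i
  rw [MeasurableEquiv.piCongrLeft_apply_apply]
  simp [subtypeSwap, extUp, i.2]

lemma extUp_recenter [Fintype α] (h : i₀ ≠ j₀) (x : {i : α // i ≠ i₀} → ℝ) :
    extUp j₀ (recenter h x) = fun i => extUp i₀ x i - extUp i₀ x j₀ := by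
  funext i
  by_cases hj : i = j₀
  · simp [extUp, hj]
  simp only [extUp, dif_neg hj, recenter, MeasurableEquiv.trans_apply,
    MeasurableEquiv.ofInvolutive_apply, shearAt, LinearMap.coe_mk, AddHom.coe_mk]
  rw [piCongrLeft_subtypeSwap_apply, piCongrLeft_subtypeSwap_apply, Equiv.swap_apply_left]
  by_cases hi : i = i₀
  · subst hi
    simp [extUp]
  · rw [if_neg (by simpa using hi), Equiv.swap_apply_of_ne_of_ne hi hj]
    simp [extUp, hi]

end ChangeOfVariables

lemma exp_mul_QDensity {W : V → V → ℝ} (hsym : ∀ i j, W i j = W j i) {i₀ j₀ : V}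
    (h : i₀ ≠ j₀) (x : {i : V // i ≠ i₀} → ℝ) :
    Real.exp (extUp i₀ x j₀) * QDensity W i₀ x = QDensity W j₀ (recenter h x) := by
  have hroot : extUp i₀ x i₀ = 0 := dif_pos rfl
  rw [QDensity, QDensity, extUp_recenter, treePoly_sub_const,
    treePoly_root_change hsym i₀ j₀, hroot, sub_zero]
  simp only [sub_sub_sub_cancel_right]
  rw [Real.sqrt_mul (Real.exp_pos _).le, two_mul (extUp i₀ x j₀), Real.exp_add,
    Real.sqrt_mul_self (Real.exp_pos _).le]
  ring

theorem stmt_14_general (W : V → V → ℝ) (hsym : ∀ i j, W i j = W j i)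
    (i₀ j₀ : V)
    (hprob : ∀ j₁ : V, ∫ x : {i : V // i ≠ j₁} → ℝ, QDensity W j₁ x = 1) :
    ∫ x : {i : V // i ≠ i₀} → ℝ, Real.exp (extUp i₀ x j₀) * QDensity W i₀ x = 1 := by
  rcases eq_or_ne i₀ j₀ with rfl | h
  · simpa [extUp] using hprob i₀
  · simp_rw [exp_mul_QDensity hsym h]
    rw [(measurePreserving_recenter h).integral_comp' (QDensity W j₀)]
    exact hprob j₀

theorem stmt_14 (W : V → V → ℝ) (hsym : ∀ i j, W i j = W j i) (hW : ∀ i j, 0 ≤ W i j)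
    (i₀ j₀ : V)
    (hprob : ∀ j₁ : V, ∫ x : {i : V // i ≠ j₁} → ℝ, QDensity W j₁ x = 1) :
    ∫ x : {i : V // i ≠ i₀} → ℝ, Real.exp (extUp i₀ x j₀) * QDensity W i₀ x = 1 :=
  stmt_14_general W hsym i₀ j₀ hprob
end

section
/- Let V be finite, let ℚ = ℚ_{i₀}^W be the measure with density proportional to exp(-(1/2)Σ_{i→j}W_{i,j}(e^{u_j-u_i}-1))√D(W,u) on {u_{i₀}=0}, let v : V → ℝ with v(i₀)=0, and γ ∈ ℝ. Define ℚ^γ as the law of u - γv under ℚ. Then ℚ ≪ ℚ^γ with Radon–Nikodym derivative (dℚ/dℚ^γ)(u) = exp((1/2)Σ_{i→j} W_{i,j}e^{u_j-u_i}(e^{γ(v_j-v_i)} - 1))·√(D(W,u)/D(W,u+γv)). -/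
open Finset MeasureTheory
open scoped ENNReal Classical

variable {V : Type*} [Fintype V] [DecidableEq V]

/-- The mixing measure `ℚ_{i₀}^W` realized on the coordinates `(u_i)_{i ≠ i₀}`. -/
noncomputable def Qmeasure (W : V → V → ℝ) (i₀ : V) :
    Measure ({i : V // i ≠ i₀} → ℝ) :=
  volume.withDensity (fun x => ENNReal.ofReal (QDensity W i₀ x))

/-!
Translation by `γ v` preserves Lebesgue measure on the coordinates `(u_i)_{i ≠ i₀}`, so `ℚ^γ`
has density `x ↦ q (x + γ v)`, where `q` is the density of `ℚ`. The zero set of `q` is empty or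
everything: `D(W, u)` vanishes iff every spanning tree towards `i₀` has an edge of zero weight,
whatever `u` is. Hence `ℚ ≪ ℚ^γ` with derivative `q x / q (x + γ v)`, in which the normalising
constants cancel and the exponents combine into the stated sum.
-/

namespace MeasureTheory

variable {α : Type*} [MeasurableSpace α]

theorem map_sub_right_withDensity {G : Type*} [MeasurableSpace G] [AddGroup G]
    [MeasurableAdd G] (μ : Measure G) [μ.IsAddRightInvariant] (a : G) {f : G → ℝ≥0∞}
    (hf : Measurable f) :
    (μ.withDensity f).map (· - a) = μ.withDensity fun x => f (x + a) := by
  have hsub := measurePreserving_sub_right μ a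
  ext s hs
  rw [Measure.map_apply hsub.measurable hs, withDensity_apply _ hs,
    withDensity_apply _ (hsub.measurable hs),
    ← hsub.setLIntegral_comp_preimage hs (f := fun x => f (x + a))
      (hf.comp (measurable_add_const a))]
  simp only [sub_add_cancel]

theorem withDensity_eq_withDensity_withDensity_div (μ : Measure α) {f g : α → ℝ≥0∞}
    (hf : Measurable f) (hg : Measurable g) (hg_top : ∀ᵐ x ∂μ, g x ≠ ∞)
    (hfg : ∀ᵐ x ∂μ, g x = 0 → f x = 0) :
    μ.withDensity f = (μ.withDensity g).withDensity (f / g) := by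
  rw [← withDensity_mul μ hg (hf.div hg)]
  refine withDensity_congr_ae ?_
  filter_upwards [hg_top, hfg] with x hx_top hx_zero
  by_cases hx : g x = 0
  · simp [hx, hx_zero hx]
  · simp only [Pi.mul_apply, Pi.div_apply]
    exact (ENNReal.mul_div_cancel hx hx_top).symm

theorem rnDeriv_withDensity_withDensity (μ : Measure α) [SigmaFinite μ] {f g : α → ℝ≥0∞}
    (hf : Measurable f) (hg : Measurable g) (hg_top : ∀ᵐ x ∂μ, g x ≠ ∞)
    (hfg : ∀ᵐ x ∂μ, g x = 0 → f x = 0) :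
    μ.withDensity f ≪ μ.withDensity g ∧
      (μ.withDensity f).rnDeriv (μ.withDensity g) =ᵐ[μ.withDensity g] f / g := by
  have : SigmaFinite (μ.withDensity g) := SigmaFinite.withDensity_of_ne_top hg_top
  rw [withDensity_eq_withDensity_withDensity_div μ hf hg hg_top hfg]
  exact ⟨withDensity_absolutelyContinuous _ _, Measure.rnDeriv_withDensity _ (hf.div hg)⟩

end MeasureTheory

omit [DecidableEq V] in
theorem continuous_treePoly (W : V → V → ℝ) (r : V) : Continuous (treePoly W r) :=
  continuous_finsetSum _ fun _ _ => continuous_finsetProd _ fun e _ =>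
    continuous_const.mul ((continuous_apply e.2).sub (continuous_apply e.1)).rexp

omit [DecidableEq V] in
theorem treePoly_nonneg {W : V → V → ℝ} (hW : ∀ i j, 0 ≤ W i j) (r : V) (u : V → ℝ) :
    0 ≤ treePoly W r u :=
  sum_nonneg fun _ _ => prod_nonneg fun _ _ => mul_nonneg (hW _ _) (Real.exp_nonneg _)

omit [DecidableEq V] in
theorem treePoly_eq_zero_iff {W : V → V → ℝ} (hW : ∀ i j, 0 ≤ W i j) (r : V) (u : V → ℝ) :
    treePoly W r u = 0 ↔ ∀ T, IsDirSpanningTree T r → ∃ e ∈ T, W e.1 e.2 = 0 := by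
  rw [treePoly, sum_eq_zero_iff_of_nonneg fun _ _ => prod_nonneg fun _ _ =>
    mul_nonneg (hW _ _) (Real.exp_nonneg _)]
  simp only [mem_filter, mem_univ, true_and, prod_eq_zero_iff, mul_eq_zero,
    Real.exp_ne_zero, or_false]

omit [Fintype V] in
theorem continuous_extUp (i₀ : V) : Continuous (extUp i₀ : ({i : V // i ≠ i₀} → ℝ) → V → ℝ) := by
  refine continuous_pi fun i => ?_
  by_cases h : i = i₀
  · simp only [extUp, h, dif_pos]
    exact continuous_const
  · simp only [extUp, dif_neg h]
    exact continuous_apply _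

omit [Fintype V] in
theorem extUp_add {i₀ : V} (x : {i : V // i ≠ i₀} → ℝ) {w : V → ℝ} (hw : w i₀ = 0) :
    extUp i₀ (fun i => x i + w i) = fun i => extUp i₀ x i + w i := by
  funext i
  by_cases h : i = i₀
  · simp [extUp, h, hw]
  · simp [extUp, h]

theorem continuous_QDensity (W : V → V → ℝ) (i₀ : V) : Continuous (QDensity W i₀) := by
  have hu := continuous_extUp (V := V) i₀
  have hD := (continuous_treePoly W i₀).comp hu
  unfold QDensity
  fun_prop

theorem QDensity_nonneg (W : V → V → ℝ) (i₀ : V) (x : {i : V // i ≠ i₀} → ℝ) :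
    0 ≤ QDensity W i₀ x := by
  unfold QDensity
  positivity

theorem QDensity_eq_zero_iff {W : V → V → ℝ} (hW : ∀ i j, 0 ≤ W i j) (i₀ : V)
    (x : {i : V // i ≠ i₀} → ℝ) :
    QDensity W i₀ x = 0 ↔ ∀ T, IsDirSpanningTree T i₀ → ∃ e ∈ T, W e.1 e.2 = 0 := by
  have hc : (Real.sqrt (2 * Real.pi) ^ (Fintype.card V - 1))⁻¹ ≠ 0 := by positivity
  rw [QDensity, mul_eq_zero, mul_eq_zero, Real.sqrt_eq_zero (treePoly_nonneg hW _ _),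
    treePoly_eq_zero_iff hW]
  simp only [hc, Real.exp_ne_zero, false_or]

theorem QDensity_div_QDensity_add {W : V → V → ℝ} (hW : ∀ i j, 0 ≤ W i j) {i₀ : V}
    {v : V → ℝ} (hv : v i₀ = 0) (γ : ℝ) (x : {i : V // i ≠ i₀} → ℝ) :
    QDensity W i₀ x / QDensity W i₀ (fun i => x i + γ * v i) =
      Real.exp ((1/2) * ∑ p ∈ univ.filter (fun p : V × V => p.1 ≠ p.2),
          W p.1 p.2 * Real.exp (extUp i₀ x p.2 - extUp i₀ x p.1) *
            (Real.exp (γ * (v p.2 - v p.1)) - 1)) *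
        Real.sqrt (treePoly W i₀ (extUp i₀ x) /
          treePoly W i₀ (fun i => extUp i₀ x i + γ * v i)) := by
  have hc : (Real.sqrt (2 * Real.pi) ^ (Fintype.card V - 1))⁻¹ ≠ 0 := by positivity
  have hexp : -(1/2) * ∑ p ∈ univ.filter (fun p : V × V => p.1 ≠ p.2),
        W p.1 p.2 * (Real.exp (extUp i₀ x p.2 - extUp i₀ x p.1) - 1) -
      -(1/2) * ∑ p ∈ univ.filter (fun p : V × V => p.1 ≠ p.2),
        W p.1 p.2 * (Real.exp ((extUp i₀ x p.2 + γ * v p.2) - (extUp i₀ x p.1 + γ * v p.1)) - 1) =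
      (1/2) * ∑ p ∈ univ.filter (fun p : V × V => p.1 ≠ p.2),
        W p.1 p.2 * Real.exp (extUp i₀ x p.2 - extUp i₀ x p.1) *
          (Real.exp (γ * (v p.2 - v p.1)) - 1) := by
    rw [← mul_sub, ← sum_sub_distrib, neg_mul, ← mul_neg, ← sum_neg_distrib]
    congr 1
    refine sum_congr rfl fun p _ => ?_
    rw [show extUp i₀ x p.2 + γ * v p.2 - (extUp i₀ x p.1 + γ * v p.1) =
      extUp i₀ x p.2 - extUp i₀ x p.1 + γ * (v p.2 - v p.1) by ring, Real.exp_add]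
    ring
  rw [QDensity, QDensity, extUp_add x (w := fun i => γ * v i) (by simp [hv]),
    Real.sqrt_div' _ (treePoly_nonneg hW _ _), mul_div_mul_comm, mul_div_mul_left _ _ hc,
    ← Real.exp_sub, ← hexp]

theorem stmt_16_general (W : V → V → ℝ) (hW : ∀ i j, 0 ≤ W i j)
    (i₀ : V)
    (v : V → ℝ) (hv : v i₀ = 0) (γ : ℝ)
    (Qγ : Measure ({i : V // i ≠ i₀} → ℝ))
    (hQγ : Qγ = Measure.map (fun x => fun i => x i - γ * v i.val) (Qmeasure W i₀)) :
    Qmeasure W i₀ ≪ Qγ ∧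
    (Qmeasure W i₀).rnDeriv Qγ =ᵐ[Qγ] fun x =>
      ENNReal.ofReal
        (Real.exp ((1/2) * ∑ p ∈ Finset.univ.filter (fun p : V × V => p.1 ≠ p.2),
            W p.1 p.2 * Real.exp (extUp i₀ x p.2 - extUp i₀ x p.1) *
              (Real.exp (γ * (v p.2 - v p.1)) - 1)) *
         Real.sqrt (treePoly W i₀ (extUp i₀ x) /
            treePoly W i₀ (fun i => extUp i₀ x i + γ * v i))) := by
  rw [Qmeasure] at hQγ ⊢
  set w : {i : V // i ≠ i₀} → ℝ := fun i => γ * v i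
  set f := fun x => ENNReal.ofReal (QDensity W i₀ x)
  have hf : Measurable f := (continuous_QDensity W i₀).measurable.ennreal_ofReal
  have hg : Measurable fun x => f (x + w) := hf.comp (measurable_add_const w)
  have hfg : ∀ x, f (x + w) = 0 → f x = 0 := fun x hx => by
    simp only [f, ENNReal.ofReal_eq_zero] at hx ⊢
    exact ((QDensity_eq_zero_iff hW i₀ x).2 <| (QDensity_eq_zero_iff hW i₀ _).1 <|
      hx.antisymm (QDensity_nonneg W i₀ _)).le
  obtain ⟨hac, hrn⟩ := rnDeriv_withDensity_withDensity volume hf hg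
    (ae_of_all _ fun _ => ENNReal.ofReal_ne_top) (ae_of_all _ hfg)
  rw [hQγ.trans (map_sub_right_withDensity volume w hf)]
  refine ⟨hac, ?_⟩
  filter_upwards [hrn, (ae_withDensity_iff hg).2 (ae_of_all _ fun _ h => h)] with x hx hpos
  rw [hx, Pi.div_apply, ← ENNReal.ofReal_div_of_pos (not_le.1 (mt ENNReal.ofReal_eq_zero.2 hpos)),
    ← QDensity_div_QDensity_add hW hv γ x]
  rfl

theorem stmt_16 (W : V → V → ℝ) (hsym : ∀ i j, W i j = W j i) (hW : ∀ i j, 0 ≤ W i j)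
    (i₀ : V)
    (hprob : ∀ j₁ : V, ∫ x : {i : V // i ≠ j₁} → ℝ, QDensity W j₁ x = 1)
    (v : V → ℝ) (hv : v i₀ = 0) (γ : ℝ)
    (Qγ : Measure ({i : V // i ≠ i₀} → ℝ))
    (hQγ : Qγ = Measure.map (fun x => fun i => x i - γ * v i.val) (Qmeasure W i₀)) :
    Qmeasure W i₀ ≪ Qγ ∧
    (Qmeasure W i₀).rnDeriv Qγ =ᵐ[Qγ] fun x =>
      ENNReal.ofReal
        (Real.exp ((1/2) * ∑ p ∈ Finset.univ.filter (fun p : V × V => p.1 ≠ p.2),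
            W p.1 p.2 * Real.exp (extUp i₀ x p.2 - extUp i₀ x p.1) *
              (Real.exp (γ * (v p.2 - v p.1)) - 1)) *
         Real.sqrt (treePoly W i₀ (extUp i₀ x) /
            treePoly W i₀ (fun i => extUp i₀ x i + γ * v i))) :=
  stmt_16_general W hW i₀ v hv γ Qγ hQγ
end
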